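/- Under the gradient-flow setup with the KL assumption, the restricted injectivity assumption on B̄(θ₀, R), and the initialization condition, there exists θ∞ ∈ ℝ^p such that θ(t) → θ∞ as t → ∞, L(F(g(θ∞))) = 0 (so θ∞ is a global minimizer of L∘F∘g), and ‖θ(t) − θ∞‖ ≤ (2/(σ₀·σ_F))·ψ(L(y(t))) for every t ≥ 0. -/

import Mathlib

open Filter MeasureTheory ProbabilityTheory
open scoped Topology NNReal

noncomputable def sigmaMin {E F : Type*} [NormedAddCommGroup E] [InnerProductSpace ℝ E]
    [CompleteSpace E] [NormedAddCommGroup F] [InnerProductSpace ℝ F] [CompleteSpace F]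
    (A : E →L[ℝ] F) : ℝ :=
  ⨅ w : {w : F // ‖w‖ = 1}, ‖ContinuousLinearMap.adjoint A w.1‖

/-
Along the flow, `t ↦ L (y t)` decreases with derivative `-‖∇f (θ t)‖²`. While `θ` stays in
`B̄(θ₀, R)`, the Lipschitz bound on `J_g` gives `‖J_g(θ) - J_g(θ₀)‖ ≤ σ₀ / 2`, hence
`‖J_g(θ)* w‖ ≥ (σ₀ / 2) ‖w‖`; with restricted injectivity, `‖∇f(θ)‖ ≥ (σ₀ σ_F / 2) ‖∇L(y)‖`,
and the KL inequality turns this into `‖θ'‖ ≤ -c (ψ ∘ L ∘ y)'` with `c = 2 / (σ₀ σ_F)`. So the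
trajectory has length at most `c (ψ (L (y a)) - ψ (L (y b)))` on `[a, b]`, at most `R' < R` from
time `0`, and a continuity argument keeps it in the ball forever. Finite length gives a limit
`θ∞`, necessarily a critical point of `f` in the ball, and the KL inequality rules out
`0 < L (F (g θ∞))`.
-/

open Set Metric InnerProductSpace
open ContinuousLinearMap (adjoint)

section

variable {E F : Type*} [NormedAddCommGroup E] [InnerProductSpace ℝ E] [CompleteSpace E]
  [NormedAddCommGroup F] [InnerProductSpace ℝ F] [CompleteSpace F]

lemma sigmaMin_mul_norm_le (A : E →L[ℝ] F) (w : F) : sigmaMin A * ‖w‖ ≤ ‖adjoint A w‖ := by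
  rcases eq_or_ne w 0 with rfl | hw
  · simp
  have hbdd : BddBelow (range fun u : {u : F // ‖u‖ = 1} => ‖adjoint A u.1‖) :=
    ⟨0, by rintro _ ⟨u, rfl⟩; exact norm_nonneg _⟩
  have hunit := ciInf_le hbdd ⟨‖w‖⁻¹ • w, norm_smul_inv_norm hw⟩
  rw [map_smul, norm_smul, norm_inv, norm_norm] at hunit
  calc sigmaMin A * ‖w‖ ≤ ‖w‖⁻¹ * ‖adjoint A w‖ * ‖w‖ := by gcongr; exact hunit
    _ = ‖adjoint A w‖ := by field_simp

lemma sigmaMin_sub_norm_sub_mul_le (A B : E →L[ℝ] F) (w : F) :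
    (sigmaMin A - ‖B - A‖) * ‖w‖ ≤ ‖adjoint B w‖ := by
  have hdiff : ‖adjoint B w - adjoint A w‖ ≤ ‖B - A‖ * ‖w‖ := by
    rw [← sub_apply, ← map_sub, ← LinearIsometryEquiv.norm_map adjoint (B - A)]
    exact (adjoint (B - A)).le_opNorm w
  linarith [sigmaMin_mul_norm_le A w, norm_sub_norm_le (adjoint A w) (adjoint B w),
    norm_sub_rev (adjoint A w) (adjoint B w)]

lemma gradient_comp {G : E → F} {φ : F → ℝ} {q : E} (hG : DifferentiableAt ℝ G q)
    (hφ : DifferentiableAt ℝ φ (G q)) :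
    gradient (fun x => φ (G x)) q = adjoint (fderiv ℝ G q) (gradient φ (G q)) := by
  refine ext_inner_right ℝ fun y => ?_
  rw [inner_gradient_left, ContinuousLinearMap.adjoint_inner_left, inner_gradient_left,
    fderiv_fun_comp q hφ hG, ContinuousLinearMap.comp_apply]

lemma gradient_eq_zero_of_nonneg_of_eq_zero {f : E → ℝ} {x : E} (hf : ∀ y, 0 ≤ f y)
    (hx : f x = 0) : gradient f x = 0 := by
  have hmin : IsLocalMin f x := Eventually.of_forall fun y => hx ▸ hf y
  rw [gradient, hmin.fderiv_eq_zero, map_zero]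

lemma mul_norm_le_norm_adjoint_of_lipschitzOn {X : Type*} [SeminormedAddCommGroup X]
    {J : X → (E →L[ℝ] F)} {x₀ x : X} {σ R : ℝ} (hσ : σ ≤ sigmaMin (J x₀)) (hσ0 : 0 ≤ σ)
    (hR : 0 < R) (hJ : ∀ a ∈ closedBall x₀ R, ∀ b ∈ closedBall x₀ R,
      ‖J a - J b‖ ≤ σ / (2 * R) * ‖a - b‖)
    (hx : x ∈ closedBall x₀ R) (w : F) : σ / 2 * ‖w‖ ≤ ‖adjoint (J x) w‖ := by
  have hnear : ‖J x - J x₀‖ ≤ σ / 2 :=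
    calc _ ≤ σ / (2 * R) * ‖x - x₀‖ := hJ x hx x₀ (mem_closedBall_self hR.le)
      _ ≤ σ / (2 * R) * R := by gcongr; exact mem_closedBall_iff_norm.1 hx
      _ = σ / 2 := by field_simp
  calc σ / 2 * ‖w‖ ≤ (sigmaMin (J x₀) - ‖J x - J x₀‖) * ‖w‖ := by gcongr; linarith
    _ ≤ _ := sigmaMin_sub_norm_sub_mul_le _ _ w

end

lemma mul_mul_norm_gradient_le_norm_gradient_comp {P N M : Type*}
    [NormedAddCommGroup P] [InnerProductSpace ℝ P] [CompleteSpace P]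
    [NormedAddCommGroup N] [InnerProductSpace ℝ N] [CompleteSpace N]
    [NormedAddCommGroup M] [InnerProductSpace ℝ M] [CompleteSpace M]
    {L : M → ℝ} {F : N → M} {g : P → N} {q : P} {a b : ℝ}
    (hL : DifferentiableAt ℝ L (F (g q))) (hF : DifferentiableAt ℝ F (g q))
    (hg : DifferentiableAt ℝ g q) (ha : 0 ≤ a)
    (hga : ∀ w, a * ‖w‖ ≤ ‖adjoint (fderiv ℝ g q) w‖)
    (hFb : b * ‖gradient L (F (g q))‖ ≤ ‖adjoint (fderiv ℝ F (g q)) (gradient L (F (g q)))‖) :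
    a * (b * ‖gradient L (F (g q))‖) ≤ ‖gradient (fun q => L (F (g q))) q‖ := by
  rw [gradient_comp (φ := fun x => L (F x)) hg (hL.comp _ hF), gradient_comp hF hL]
  exact (mul_le_mul_of_nonneg_left hFb ha).trans (hga _)

lemma forall_le_of_forall_Ico_le {u : ℝ → ℝ} {r R : ℝ} (hu : ContinuousOn u (Ici 0))
    (hrR : r < R) (hstep : ∀ T ≥ 0, (∀ s ∈ Ico 0 T, u s ≤ R) → u T ≤ r) :
    ∀ t ≥ 0, u t ≤ r := by
  suffices hlt : ∀ t ≥ 0, u t < R from fun t ht => hstep t ht fun s hs => (hlt s hs.1).le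
  by_contra! ⟨t₁, ht₁, hR⟩
  -- the first time at which `u` reaches `R`
  set S := Ici 0 ∩ u ⁻¹' Ici R
  have hbdd : BddBelow S := ⟨0, fun s hs => hs.1⟩
  have hτ : sInf S ∈ S :=
    (hu.preimage_isClosed_of_isClosed isClosed_Ici isClosed_Ici).csInf_mem ⟨t₁, ht₁, hR⟩ hbdd
  have hbefore : ∀ s ∈ Ico 0 (sInf S), u s ≤ R := fun s hs =>
    (not_le.1 fun hRs => hs.2.not_ge (csInf_le hbdd ⟨hs.1, hRs⟩)).le
  linarith [hstep _ hτ.1 hbefore, show R ≤ u (sInf S) from hτ.2]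

section

variable {E : Type*} [NormedAddCommGroup E]

lemma exists_tendsto_of_norm_sub_le_sub [CompleteSpace E] {φ : ℝ → E} {Φ : ℝ → ℝ}
    (hΦ : ∀ t ≥ 0, 0 ≤ Φ t) (hφ : ∀ a b, 0 ≤ a → a ≤ b → ‖φ b - φ a‖ ≤ Φ a - Φ b) :
    ∃ x, Tendsto φ atTop (𝓝 x) ∧ ∀ t ≥ 0, ‖φ t - x‖ ≤ Φ t := by
  have hanti : ∀ a b, 0 ≤ a → a ≤ b → Φ b ≤ Φ a := fun a b ha hab =>
    by linarith [hφ a b ha hab, norm_nonneg (φ b - φ a)]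
  have hΨ : Antitone fun t => Φ (max t 0) := fun a b hab =>
    hanti _ _ (le_max_right a 0) (max_le_max_right 0 hab)
  have hΨbdd : BddBelow (range fun t => Φ (max t 0)) :=
    ⟨0, by rintro _ ⟨t, rfl⟩; exact hΦ _ (le_max_right t 0)⟩
  have hΨlim := tendsto_atTop_ciInf hΨ hΨbdd
  have hcauchy : CauchySeq φ := by
    refine Metric.cauchySeq_iff'.2 fun ε hε => ?_
    obtain ⟨N, hN, hN0⟩ := ((hΨlim.eventually (gt_mem_nhds (lt_add_of_pos_right _ hε))).and
      (eventually_ge_atTop 0)).exists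
    refine ⟨N, fun t hNt => ?_⟩
    have hlow : ⨅ s, Φ (max s 0) ≤ Φ t := by
      simpa [max_eq_left (hN0.trans hNt)] using ciInf_le hΨbdd t
    rw [max_eq_left hN0] at hN
    rw [dist_eq_norm]
    linarith [hφ N t hN0 hNt]
  obtain ⟨x, hx⟩ := cauchySeq_tendsto_of_complete hcauchy
  refine ⟨x, hx, fun t ht => ?_⟩
  rw [norm_sub_rev]
  refine le_of_tendsto ((hx.sub_const (φ t)).norm) ?_
  filter_upwards [eventually_ge_atTop t] with s hts
  linarith [hφ t s ht hts, hΦ s (ht.trans hts)]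

lemma eq_zero_of_tendsto_of_tendsto_deriv [NormedSpace ℝ E] {θ θ' : ℝ → E} {x v : E}
    (hθ : ∀ t ≥ 0, HasDerivAt θ (θ' t) t) (hx : Tendsto θ atTop (𝓝 x))
    (hv : Tendsto θ' atTop (𝓝 v)) : v = 0 := by
  -- the increments over unit intervals tend both to `x - x` and, by the mean value theorem, to `v`
  have hzero : Tendsto (fun t => θ (t + 1) - θ t) atTop (𝓝 0) := by
    simpa using (hx.comp (tendsto_atTop_add_const_right _ 1 tendsto_id)).sub hx
  refine tendsto_nhds_unique (Metric.tendsto_atTop.2 fun ε hε => ?_) hzero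
  obtain ⟨N, hN⟩ := eventually_atTop.1 (hv.eventually (closedBall_mem_nhds v (half_pos hε)))
  refine ⟨max N 0, fun t ht => ?_⟩
  have hmvt := norm_image_sub_le_of_norm_deriv_le_segment' (f := fun s => θ s - s • v)
    (a := t) (b := t + 1) (C := ε / 2)
    (fun s hs => ((hθ s ((le_max_right N 0).trans (ht.trans hs.1))).sub
      ((hasDerivAt_id s).smul_const v)).hasDerivWithinAt)
    (fun s hs => by simpa [dist_eq_norm] using hN s ((le_max_left N 0).trans (ht.trans hs.1)))
    (t + 1) ⟨by linarith, le_rfl⟩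
  rw [dist_eq_norm]
  calc ‖θ (t + 1) - θ t - v‖ = ‖θ (t + 1) - (t + 1) • v - (θ t - t • v)‖ := by
        rw [add_smul, one_smul]; congr 1; abel
    _ ≤ ε / 2 * (t + 1 - t) := hmvt
    _ < ε := by linarith

end

section GradientFlow

variable {E : Type*} [NormedAddCommGroup E] [InnerProductSpace ℝ E] [CompleteSpace E]
  {f : E → ℝ} {θ : ℝ → E}

lemma hasDerivAt_comp_of_gradientFlow {t : ℝ} (hf : DifferentiableAt ℝ f (θ t))
    (hθ : HasDerivAt θ (-gradient f (θ t)) t) :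
    HasDerivAt (fun s => f (θ s)) (-‖gradient f (θ t)‖ ^ 2) t := by
  have hchain := hf.hasFDerivAt.comp_hasDerivAt t hθ
  rwa [← inner_gradient_left, inner_neg_right, real_inner_self_eq_norm_sq] at hchain

lemma antitoneOn_comp_of_gradientFlow (hf : Differentiable ℝ f)
    (hθ : ∀ t ≥ 0, HasDerivAt θ (-gradient f (θ t)) t) :
    AntitoneOn (fun t => f (θ t)) (Ici 0) := by
  refine antitoneOn_of_hasDerivWithinAt_nonpos (convex_Ici 0)
    (fun t ht => ((hf _).continuousAt.comp (hθ t ht).continuousAt).continuousWithinAt)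
    (fun t ht => (hasDerivAt_comp_of_gradientFlow (hf _) (hθ t ?_)).hasDerivWithinAt)
    (fun t _ => neg_nonpos.2 (sq_nonneg _))
  rw [interior_Ici] at ht
  exact ht.le

lemma gradient_eq_zero_of_tendsto_gradientFlow (hf : ContDiff ℝ 1 f)
    (hθ : ∀ t ≥ 0, HasDerivAt θ (-gradient f (θ t)) t) {x : E}
    (hx : Tendsto θ atTop (𝓝 x)) : gradient f x = 0 := by
  have hgrad : Continuous (gradient f) :=
    (toDual ℝ E).symm.continuous.comp (hf.continuous_fderiv one_ne_zero)
  exact neg_eq_zero.1 <| eq_zero_of_tendsto_of_tendsto_deriv hθ hx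
    ((hgrad.tendsto x).comp hx).neg

variable {ψ ψ' : ℝ → ℝ} {r c : ℝ}

lemma norm_sub_le_of_gradientFlow_of_kl (hf : Differentiable ℝ f) (hf0 : ∀ x, 0 ≤ f x)
    (hθ : ∀ t ≥ 0, HasDerivAt θ (-gradient f (θ t)) t)
    (hψcont : ContinuousOn ψ (Ico 0 r)) (hψd : ∀ s ∈ Ioo 0 r, HasDerivAt ψ (ψ' s) s)
    {a b : ℝ} (ha : 0 ≤ a) (hab : a ≤ b) (hr : f (θ a) < r)
    (hKL : ∀ s ∈ Ico a b, 0 < f (θ s) → 1 ≤ c * ψ' (f (θ s)) * ‖gradient f (θ s)‖) :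
    ‖θ b - θ a‖ ≤ c * (ψ (f (θ a)) - ψ (f (θ b))) := by
  have hanti := antitoneOn_comp_of_gradientFlow hf hθ
  have hmaps : MapsTo (fun t => f (θ t)) (Icc a b) (Ico 0 r) := fun s hs =>
    ⟨hf0 _, (hanti ha (ha.trans hs.1) hs.1).trans_lt hr⟩
  have hθcont : ContinuousOn θ (Icc a b) := fun s hs =>
    (hθ s (ha.trans hs.1)).continuousAt.continuousWithinAt
  -- once `f ∘ θ` vanishes it stays zero, and there both sides below have zero derivative
  have hstop : ∀ s ≥ 0, f (θ s) = 0 → ∀ u ∈ Ici s, f (θ u) = 0 := fun s hs hzero u hu =>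
    le_antisymm (hzero ▸ hanti hs (hs.trans hu) hu) (hf0 _)
  refine image_norm_le_of_norm_deriv_right_le_deriv_boundary' (f := fun t => θ t - θ a)
    (B := fun t => c * (ψ (f (θ a)) - ψ (f (θ t))))
    (B' := fun s => c * ψ' (f (θ s)) * ‖gradient f (θ s)‖ ^ 2)
    (hθcont.sub continuousOn_const)
    (fun s hs => ((hθ s (ha.trans hs.1)).sub_const _).hasDerivWithinAt) (by simp)
    (continuousOn_const.mul (continuousOn_const.sub
      (hψcont.comp (hf.continuous.comp_continuousOn hθcont) hmaps)))
    (fun s hs => ?_) (fun s hs => ?_) ⟨hab, le_rfl⟩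
  all_goals
    have hs0 : 0 ≤ s := ha.trans hs.1
    rcases (hf0 (θ s)).eq_or_lt with hzero | hpos
  · have hconst : ∀ u ∈ Ici s, c * (ψ (f (θ a)) - ψ (f (θ u))) =
        c * (ψ (f (θ a)) - ψ (f (θ s))) := fun u hu => by
      rw [hstop s hs0 hzero.symm u hu, ← hzero]
    rw [show c * ψ' (f (θ s)) * ‖gradient f (θ s)‖ ^ 2 = 0 by
      simp [gradient_eq_zero_of_nonneg_of_eq_zero hf0 hzero.symm]]
    exact (hasDerivWithinAt_const s (Ici s) _).congr hconst rfl
  · have hψh := (hψd _ ⟨hpos, (hmaps (Ico_subset_Icc_self hs)).2⟩).comp s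
      (hasDerivAt_comp_of_gradientFlow (hf _) (hθ s hs0))
    exact (((hψh.const_sub _).const_mul c).congr_deriv (by ring)).hasDerivWithinAt
  · simp [gradient_eq_zero_of_nonneg_of_eq_zero hf0 hzero.symm]
  · have hG := norm_nonneg (gradient f (θ s))
    rw [norm_neg]
    nlinarith [hKL s hs hpos]

theorem exists_tendsto_of_gradientFlow_of_kl (hf : ContDiff ℝ 1 f) (hf0 : ∀ x, 0 ≤ f x)
    (hθ : ∀ t ≥ 0, HasDerivAt θ (-gradient f (θ t)) t) {R : ℝ} (hr : f (θ 0) < r) (hψ0 : ψ 0 = 0) (hψcont : ContinuousOn ψ (Ico 0 r))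
    (hψmono : MonotoneOn ψ (Ico 0 r)) (hψd : ∀ s ∈ Ioo 0 r, HasDerivAt ψ (ψ' s) s)
    (hc : 0 ≤ c)
    (hKL : ∀ q ∈ closedBall (θ 0) R, 0 < f q → f q < r → 1 ≤ c * ψ' (f q) * ‖gradient f q‖)
    (hR : c * ψ (f (θ 0)) < R) :
    ∃ x, Tendsto θ atTop (𝓝 x) ∧ f x = 0 ∧ ∀ t ≥ 0, ‖θ t - x‖ ≤ c * ψ (f (θ t)) := by
  have hfd : Differentiable ℝ f := hf.differentiable one_ne_zero
  have hanti := antitoneOn_comp_of_gradientFlow hfd hθ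
  have hlt : ∀ t ≥ 0, f (θ t) < r := fun t ht => (hanti self_mem_Ici ht ht).trans_lt hr
  have hψnn : ∀ t ≥ 0, 0 ≤ c * ψ (f (θ t)) := fun t ht => mul_nonneg hc <|
    hψ0 ▸ hψmono ⟨le_rfl, (hf0 _).trans_lt (hlt t ht)⟩ ⟨hf0 _, hlt t ht⟩ (hf0 _)
  have hlength : ∀ a b, 0 ≤ a → a ≤ b → (∀ s ∈ Ico a b, θ s ∈ closedBall (θ 0) R) →
      ‖θ b - θ a‖ ≤ c * (ψ (f (θ a)) - ψ (f (θ b))) := fun a b ha hab hball =>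
    norm_sub_le_of_gradientFlow_of_kl hfd hf0 hθ hψcont hψd ha hab (hlt a ha)
      fun s hs hpos => hKL _ (hball s hs) hpos (hlt s (ha.trans hs.1))
  have hstay : ∀ t ≥ 0, ‖θ t - θ 0‖ ≤ c * ψ (f (θ 0)) :=
    forall_le_of_forall_Ico_le
      (fun t ht => ((hθ t ht).continuousAt.sub continuousAt_const).norm.continuousWithinAt) hR
      fun T hT hball => by
        linarith [hψnn T hT,
          hlength 0 T le_rfl hT fun s hs => mem_closedBall_iff_norm.2 (hball s hs)]
  obtain ⟨x, hx, hbound⟩ := exists_tendsto_of_norm_sub_le_sub hψnn fun a b ha hab => by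
    rw [← mul_sub]
    exact hlength a b ha hab fun s hs =>
      mem_closedBall_iff_norm.2 ((hstay s (ha.trans hs.1)).trans hR.le)
  refine ⟨x, hx, ?_, hbound⟩
  have hxball : x ∈ closedBall (θ 0) R := mem_closedBall_iff_norm.2 <|
    (le_of_tendsto ((hx.sub_const _).norm) (eventually_ge_atTop 0 |>.mono hstay)).trans hR.le
  have hxr : f x < r := (le_of_tendsto ((hfd.continuous.tendsto x).comp hx)
    (eventually_ge_atTop 0 |>.mono fun t ht => hanti self_mem_Ici ht ht)).trans_lt hr
  by_contra hne
  have hKLx := hKL x hxball ((hf0 x).lt_of_ne' hne) hxr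
  rw [gradient_eq_zero_of_tendsto_gradientFlow hf hθ hx, norm_zero, mul_zero] at hKLx
  exact zero_lt_one.not_ge hKLx

end GradientFlow

theorem stmt5_general
    {n m p : ℕ}
    (L : EuclideanSpace ℝ (Fin m) → ℝ)
    (F : EuclideanSpace ℝ (Fin n) → EuclideanSpace ℝ (Fin m))
    (g : EuclideanSpace ℝ (Fin p) → EuclideanSpace ℝ (Fin n))
    (hL : ContDiff ℝ 1 L)
    (hLnonneg : ∀ v, 0 ≤ L v)
    (hF : ContDiff ℝ 1 F)
    (hg : ContDiff ℝ 1 g)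
    (θ θ' : ℝ → EuclideanSpace ℝ (Fin p)) (θ₀ : EuclideanSpace ℝ (Fin p))
    (hθ0 : θ 0 = θ₀)
    (hθd : ∀ t ≥ (0:ℝ), HasDerivAt θ (θ' t) t)
    (hflow : ∀ t ≥ (0:ℝ), θ' t = -gradient (fun q => L (F (g q))) (θ t))
    (r₀ : ℝ) (hr₀ : L (F (g (θ 0))) < r₀)
    (ψ ψ' : ℝ → ℝ) (hψ0 : ψ 0 = 0)
    (hψcont : ContinuousOn ψ (Set.Ico 0 r₀))
    (hψmono : StrictMonoOn ψ (Set.Ico 0 r₀))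
    (hψd : ∀ s ∈ Set.Ioo (0:ℝ) r₀, HasDerivAt ψ (ψ' s) s)
    (hKL : ∀ v : EuclideanSpace ℝ (Fin m), 0 < L v → L v < r₀ →
      1 ≤ ψ' (L v) * ‖gradient L v‖)
    (σF : ℝ) (hσF : 0 < σF)
    (σ₀ : ℝ) (hσ₀ : σ₀ = sigmaMin (fderiv ℝ g θ₀)) (hσ₀pos : 0 < σ₀)
    (R : ℝ) (hRpos : 0 < R)
    (hinj : ∀ q ∈ Metric.closedBall θ₀ R,
      gradient L (F (g q)) ∈ LinearMap.range (fderiv ℝ F (g q) : EuclideanSpace ℝ (Fin n) →ₗ[ℝ] EuclideanSpace ℝ (Fin m)) ∧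
      ∀ z ∈ LinearMap.range (fderiv ℝ F (g q) : EuclideanSpace ℝ (Fin n) →ₗ[ℝ] EuclideanSpace ℝ (Fin m)),
        σF * ‖z‖ ≤ ‖ContinuousLinearMap.adjoint (fderiv ℝ F (g q)) z‖)
    (hLip : ∀ a ∈ Metric.closedBall θ₀ R, ∀ b ∈ Metric.closedBall θ₀ R,
      ‖fderiv ℝ g a - fderiv ℝ g b‖ ≤ σ₀ / (2 * R) * ‖a - b‖)
    (R' : ℝ) (hRdef : R' = 2 / (σF * σ₀) * ψ (L (F (g θ₀)))) (hRR : R' < R) :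
    ∃ θlim : EuclideanSpace ℝ (Fin p), Tendsto θ atTop (𝓝 θlim) ∧
      L (F (g θlim)) = 0 ∧
      ∀ t ≥ (0:ℝ), ‖θ t - θlim‖ ≤ 2 / (σ₀ * σF) * ψ (L (F (g (θ t)))) := by
  have hKLf : ∀ q ∈ closedBall θ₀ R, 0 < L (F (g q)) → L (F (g q)) < r₀ →
      1 ≤ 2 / (σ₀ * σF) * ψ' (L (F (g q))) * ‖gradient (fun q => L (F (g q))) q‖ := by
    intro q hq hpos hlt
    obtain ⟨hmem, hσ⟩ := hinj q hq
    have hlow := mul_mul_norm_gradient_le_norm_gradient_comp (hL.differentiable one_ne_zero _)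
      (hF.differentiable one_ne_zero _) (hg.differentiable one_ne_zero _) (by positivity)
      (mul_norm_le_norm_adjoint_of_lipschitzOn hσ₀.le hσ₀pos.le hRpos hLip hq) (hσ _ hmem)
    have hKLq := hKL _ hpos hlt
    have hψ' : 0 < ψ' (L (F (g q))) :=
      pos_of_mul_pos_left (one_pos.trans_le hKLq) (norm_nonneg _)
    calc 1 ≤ ψ' (L (F (g q))) * ‖gradient L (F (g q))‖ := hKLq
      _ ≤ ψ' (L (F (g q))) * (2 / (σ₀ * σF) * ‖gradient (fun q => L (F (g q))) q‖) := by
          gcongr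
          rw [div_mul_eq_mul_div, le_div_iff₀ (by positivity)]
          linarith
      _ = _ := by ring
  exact exists_tendsto_of_gradientFlow_of_kl (f := fun q => L (F (g q)))
    (hL.comp (hF.comp hg)) (fun q => hLnonneg _) (fun t ht => hflow t ht ▸ hθd t ht) hr₀ hψ0
    hψcont hψmono.monotoneOn hψd (by positivity) (hθ0 ▸ hKLf)
    (by rwa [hθ0, mul_comm σ₀, ← hRdef])

theorem stmt5
    {n m p : ℕ} (hn : 0 < n) (hm : 0 < m) (hp : 0 < p)
    (L : EuclideanSpace ℝ (Fin m) → ℝ)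
    (F : EuclideanSpace ℝ (Fin n) → EuclideanSpace ℝ (Fin m))
    (g : EuclideanSpace ℝ (Fin p) → EuclideanSpace ℝ (Fin n))
    (hL : ContDiff ℝ 1 L)
    (hLnonneg : ∀ v, 0 ≤ L v) (hLmin : ∃ v, L v = 0)
    (hLgrad : ∀ s : Set (EuclideanSpace ℝ (Fin m)), Bornology.IsBounded s →
      ∃ K : ℝ≥0, LipschitzOnWith K (fun v => gradient L v) s)
    (hF : ContDiff ℝ 1 F)
    (hJF : ∀ s : Set (EuclideanSpace ℝ (Fin n)), Bornology.IsBounded s →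
      ∃ K : ℝ≥0, LipschitzOnWith K (fun x => fderiv ℝ F x) s)
    (hg : ContDiff ℝ 1 g)
    (hJg : ∀ s : Set (EuclideanSpace ℝ (Fin p)), Bornology.IsBounded s →
      ∃ K : ℝ≥0, LipschitzOnWith K (fun q => fderiv ℝ g q) s)
    (θ θ' : ℝ → EuclideanSpace ℝ (Fin p)) (θ₀ : EuclideanSpace ℝ (Fin p))
    (hθ0 : θ 0 = θ₀)
    (hθd : ∀ t ≥ (0:ℝ), HasDerivAt θ (θ' t) t)
    (hθcont : ContinuousOn θ' (Set.Ici 0))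
    (hflow : ∀ t ≥ (0:ℝ), θ' t = -gradient (fun q => L (F (g q))) (θ t))
    (r₀ : ℝ) (hr₀ : L (F (g (θ 0))) < r₀)
    (ψ ψ' : ℝ → ℝ) (hψ0 : ψ 0 = 0)
    (hψcont : ContinuousOn ψ (Set.Ico 0 r₀))
    (hψmono : StrictMonoOn ψ (Set.Ico 0 r₀))
    (hψd : ∀ s ∈ Set.Ioo (0:ℝ) r₀, HasDerivAt ψ (ψ' s) s)
    (hKL : ∀ v : EuclideanSpace ℝ (Fin m), 0 < L v → L v < r₀ →
      1 ≤ ψ' (L v) * ‖gradient L v‖)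
    (σF : ℝ) (hσF : 0 < σF)
    (σ₀ : ℝ) (hσ₀ : σ₀ = sigmaMin (fderiv ℝ g θ₀)) (hσ₀pos : 0 < σ₀)
    (R : ℝ) (hRpos : 0 < R)
    (hinj : ∀ q ∈ Metric.closedBall θ₀ R,
      gradient L (F (g q)) ∈ LinearMap.range (fderiv ℝ F (g q) : EuclideanSpace ℝ (Fin n) →ₗ[ℝ] EuclideanSpace ℝ (Fin m)) ∧
      ∀ z ∈ LinearMap.range (fderiv ℝ F (g q) : EuclideanSpace ℝ (Fin n) →ₗ[ℝ] EuclideanSpace ℝ (Fin m)),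
        σF * ‖z‖ ≤ ‖ContinuousLinearMap.adjoint (fderiv ℝ F (g q)) z‖)
    (hLip : ∀ a ∈ Metric.closedBall θ₀ R, ∀ b ∈ Metric.closedBall θ₀ R,
      ‖fderiv ℝ g a - fderiv ℝ g b‖ ≤ σ₀ / (2 * R) * ‖a - b‖)
    (R' : ℝ) (hRdef : R' = 2 / (σF * σ₀) * ψ (L (F (g θ₀)))) (hRR : R' < R) :
    ∃ θlim : EuclideanSpace ℝ (Fin p), Tendsto θ atTop (𝓝 θlim) ∧
      L (F (g θlim)) = 0 ∧
      ∀ t ≥ (0:ℝ), ‖θ t - θlim‖ ≤ 2 / (σ₀ * σF) * ψ (L (F (g (θ t)))) :=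
  stmt5_general L F g hL hLnonneg hF hg θ θ' θ₀ hθ0 hθd hflow r₀ hr₀ ψ ψ' hψ0 hψcont hψmono hψd hKL
    σF hσF σ₀ hσ₀ hσ₀pos R hRpos hinj hLip R' hRdef hRR
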